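/- For all real α, β > 1/2, the multivariate Beta function satisfies B₂(α+1, β) = (α(α−1/2))/((α+β)(α+β−1/2)) · B₂(α, β). -/

import Mathlib

open MeasureTheory Real Filter Finset

/-- The domain Ω: the set of (x,y,z) such that w = [[x,z],[z,y]] and I − w
are both positive definite. -/
def Omega : Set (ℝ × ℝ × ℝ) :=
  {p | 0 < p.1 ∧ 0 < 1 - p.1 ∧ 0 < p.1 * p.2.1 - p.2.2 ^ 2 ∧
    0 < (1 - p.1) * (1 - p.2.1) - p.2.2 ^ 2}

/-- Unnormalized density of the 2×2 multivariate Beta distribution. -/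
noncomputable def betaDens (α β : ℝ) (p : ℝ × ℝ × ℝ) : ℝ :=
  ((1 - p.1) * (1 - p.2.1) - p.2.2 ^ 2) ^ (α - 3/2) *
    (p.1 * p.2.1 - p.2.2 ^ 2) ^ (β - 3/2)

/-- The multivariate Beta function B₂(α,β). -/
noncomputable def B2 (α β : ℝ) : ℝ := ∫ p in Omega, betaDens α β p

/-- Expectation E_{α,β}[f(X,Y,Z)] under the 2×2 multivariate Beta distribution. -/
noncomputable def Eab (α β : ℝ) (f : ℝ × ℝ × ℝ → ℝ) : ℝ :=
  (B2 α β)⁻¹ * ∫ p in Omega, f p * betaDens α β p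

/-!
Integrate the density over Ω in the order y, z, x. For fixed x ∈ (0, 1) and z, the fiber of Ω
is the interval z² / x < y < 1 - z² / (1 - x), on which both factors of the density are affine in
y and vanish at the endpoints; so the y-integral is a Beta integral, equal to a multiple of
(1 - z² / (x (1 - x)))^(α + β - 2). The z-integral over z² < x (1 - x) is again a Beta integral
B(α + β - 1, α + β - 1), which Legendre's duplication formula turns into a quotient of Gamma
values, and the remaining x-integral is B(β, α). Altogether B₂(α, β) = Γ₂(α) Γ₂(β) / Γ₂(α + β),
and the recursion follows from Γ(s + 1) = s Γ(s).
-/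

open Set ProbabilityTheory

theorem lintegral_Ioo_rpow_mul_one_sub_rpow {u v : ℝ} (hu : 0 < u) (hv : 0 < v) :
    ∫⁻ x in Ioo 0 1, ENNReal.ofReal (x ^ (u - 1) * (1 - x) ^ (v - 1)) =
      ENNReal.ofReal (beta u v) := by
  have hB := beta_pos hu hv
  have h := lintegral_betaPDF_eq_one hu hv
  simp_rw [lintegral_betaPDF, mul_assoc, ENNReal.ofReal_mul (one_div_pos.2 hB).le] at h
  rw [lintegral_const_mul' _ _ ENNReal.ofReal_ne_top, one_div, ENNReal.ofReal_inv_of_pos hB,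
    mul_comm] at h
  rw [ENNReal.eq_inv_of_mul_eq_one_left h, inv_inv]

theorem lintegral_Ioo_sub_rpow_mul_sub_rpow {p q u v : ℝ} (hpq : p < q) (hu : 0 < u)
    (hv : 0 < v) :
    ∫⁻ y in Ioo p q, ENNReal.ofReal ((y - p) ^ (u - 1) * (q - y) ^ (v - 1)) =
      ENNReal.ofReal ((q - p) ^ (u + v - 1) * beta u v) := by
  have hd : 0 < q - p := sub_pos.2 hpq
  have himage : (fun s => (q - p) * s + p) '' Ioo 0 1 = Ioo p q := by
    rw [image_affine_Ioo hd]; ring_nf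
  rw [← himage, lintegral_image_eq_lintegral_abs_deriv_mul measurableSet_Ioo
      (fun s _ => ((hasDerivAt_id' s).const_mul (q - p) |>.add_const p).hasDerivWithinAt)
      (fun a _ b _ h => by simpa [hd.ne'] using h)]
  have hscale : ∀ s ∈ Ioo (0 : ℝ) 1,
      ENNReal.ofReal |(q - p) * 1| *
          ENNReal.ofReal (((q - p) * s + p - p) ^ (u - 1) * (q - ((q - p) * s + p)) ^ (v - 1)) =
        ENNReal.ofReal ((q - p) ^ (u + v - 1)) *
          ENNReal.ofReal (s ^ (u - 1) * (1 - s) ^ (v - 1)) := by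
    rintro s ⟨hs0, hs1⟩
    rw [mul_one, abs_of_pos hd, ← ENNReal.ofReal_mul hd.le, ← ENNReal.ofReal_mul (by positivity)]
    congr 1
    rw [add_sub_cancel_right, show q - ((q - p) * s + p) = (q - p) * (1 - s) by ring,
      mul_rpow hd.le hs0.le, mul_rpow hd.le (by linarith),
      show u + v - 1 = 1 + (u - 1) + (v - 1) by ring, rpow_add hd, rpow_add hd, rpow_one]
    ring
  rw [setLIntegral_congr_fun measurableSet_Ioo hscale,
    lintegral_const_mul' _ _ ENNReal.ofReal_ne_top, lintegral_Ioo_rpow_mul_one_sub_rpow hu hv,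
    ← ENNReal.ofReal_mul (by positivity)]

theorem two_rpow_mul_beta_self {w : ℝ} (hw : 0 < w) :
    2 ^ (2 * w - 1) * beta w w = √π * Gamma w / Gamma (w + 1/2) := by
  have hdup := Gamma_mul_Gamma_add_half w
  have h2 : (2 : ℝ) ^ (2 * w - 1) * 2 ^ (1 - 2 * w) = 1 := by
    rw [← rpow_add two_pos]; norm_num
  have hΓ := (Gamma_pos_of_pos (by linarith : 0 < w + 1/2)).ne'
  rw [beta, ← two_mul, mul_div_assoc', div_eq_div_iff (Gamma_pos_of_pos (by linarith)).ne' hΓ]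
  linear_combination (2 ^ (2 * w - 1) * Gamma w) * hdup + Gamma w * Gamma (2 * w) * √π * h2

theorem lintegral_Ioo_one_sub_sq_div_sq_rpow {c w : ℝ} (hc : 0 < c) (hw : 0 < w) :
    ∫⁻ z in Ioo (-c) c, ENNReal.ofReal ((1 - z ^ 2 / c ^ 2) ^ (w - 1)) =
      ENNReal.ofReal (c * (√π * Gamma w / Gamma (w + 1/2))) := by
  have hfactor : ∀ z ∈ Ioo (-c) c, ENNReal.ofReal ((1 - z ^ 2 / c ^ 2) ^ (w - 1)) =
      ENNReal.ofReal ((c ^ (w - 1) * c ^ (w - 1))⁻¹) *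
        ENNReal.ofReal ((z - -c) ^ (w - 1) * (c - z) ^ (w - 1)) := by
    rintro z ⟨hz1, hz2⟩
    rw [← ENNReal.ofReal_mul (by positivity)]
    congr 1
    rw [show 1 - z ^ 2 / c ^ 2 = (z - -c) / c * ((c - z) / c) by field_simp; ring,
      mul_rpow (div_nonneg (by linarith) hc.le) (div_nonneg (by linarith) hc.le),
      div_rpow (by linarith) hc.le, div_rpow (by linarith) hc.le]
    field_simp
  rw [setLIntegral_congr_fun measurableSet_Ioo hfactor,
    lintegral_const_mul' _ _ ENNReal.ofReal_ne_top,
    lintegral_Ioo_sub_rpow_mul_sub_rpow (by linarith) hw hw, ← ENNReal.ofReal_mul (by positivity),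
    ← two_rpow_mul_beta_self hw, show c - -c = 2 * c by ring, mul_rpow zero_le_two hc.le,
    show w + w - 1 = (w - 1) + (w - 1) + 1 by ring, rpow_add hc, rpow_add hc, rpow_one,
    show (w - 1) + (w - 1) + 1 = 2 * w - 1 by ring]
  congr 1
  field_simp

/-- The multivariate Gamma function of order 2. -/
noncomputable def Gamma2 (a : ℝ) : ℝ := √π * Gamma a * Gamma (a - 1/2)

theorem Gamma2_pos {a : ℝ} (ha : 1/2 < a) : 0 < Gamma2 a := by
  have := Gamma_pos_of_pos (by linarith : 0 < a)
  have := Gamma_pos_of_pos (by linarith : 0 < a - 1/2)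
  unfold Gamma2; positivity

theorem Gamma2_add_one {a : ℝ} (ha : a ≠ 0) (ha' : a - 1/2 ≠ 0) :
    Gamma2 (a + 1) = a * (a - 1/2) * Gamma2 a := by
  rw [Gamma2, Gamma2, Gamma_add_one ha, show a + 1 - 1/2 = (a - 1/2) + 1 by ring,
    Gamma_add_one ha']
  ring

section Omega

variable {α β x y z : ℝ}

theorem measurableSet_Omega : MeasurableSet Omega := by
  unfold Omega; measurability

theorem measurable_betaDens (α β : ℝ) : Measurable (betaDens α β) := by
  unfold betaDens; fun_prop

theorem mem_Omega_iff (hx0 : 0 < x) (hx1 : x < 1) :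
    (x, y, z) ∈ Omega ↔ y ∈ Ioo (z ^ 2 / x) (1 - z ^ 2 / (1 - x)) := by
  have h1x : 0 < 1 - x := sub_pos.2 hx1
  rw [Set.mem_Ioo, div_lt_iff₀ hx0, lt_sub_comm, div_lt_iff₀ h1x]
  constructor
  · rintro ⟨-, -, h, h'⟩
    constructor <;> linarith
  · rintro ⟨h, h'⟩
    exact ⟨hx0, h1x, by linarith, by linarith⟩

theorem betaDens_eq_of_mem (hx0 : 0 < x) (hx1 : x < 1)
    (hy : y ∈ Ioo (z ^ 2 / x) (1 - z ^ 2 / (1 - x))) :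
    betaDens α β (x, y, z) = (1 - x) ^ (α - 3/2) * x ^ (β - 3/2) *
      ((y - z ^ 2 / x) ^ (β - 3/2) * (1 - z ^ 2 / (1 - x) - y) ^ (α - 3/2)) := by
  have h1x : 0 < 1 - x := sub_pos.2 hx1
  have hp : x * y - z ^ 2 = x * (y - z ^ 2 / x) := by field_simp
  have hq : (1 - x) * (1 - y) - z ^ 2 = (1 - x) * (1 - z ^ 2 / (1 - x) - y) := by
    field_simp; ring
  rw [betaDens, hp, hq, mul_rpow h1x.le (by linarith [hy.2]),
    mul_rpow hx0.le (by linarith [hy.1])]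
  ring

theorem lintegral_indicator_Omega_fiber (hα : 1/2 < α) (hβ : 1/2 < β) (hx0 : 0 < x)
    (hx1 : x < 1) :
    ∫⁻ y, Omega.indicator (fun p => ENNReal.ofReal (betaDens α β p)) (x, y, z) =
      (Ioo (-√(x * (1 - x))) √(x * (1 - x))).indicator (fun z => ENNReal.ofReal
        ((1 - x) ^ (α - 3/2) * x ^ (β - 3/2) * beta (β - 1/2) (α - 1/2) *
          (1 - z ^ 2 / (x * (1 - x))) ^ (α + β - 2))) z := by
  have h1x : 0 < 1 - x := sub_pos.2 hx1
  set p := z ^ 2 / x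
  set q := 1 - z ^ 2 / (1 - x)
  have hqp : q - p = 1 - z ^ 2 / (x * (1 - x)) := by simp only [p, q]; field_simp; ring
  have hfiber : ∀ y, Omega.indicator (fun p => ENNReal.ofReal (betaDens α β p)) (x, y, z) =
      (Ioo p q).indicator (fun y => ENNReal.ofReal ((1 - x) ^ (α - 3/2) * x ^ (β - 3/2)) *
        ENNReal.ofReal ((y - p) ^ (β - 1/2 - 1) * (q - y) ^ (α - 1/2 - 1))) y := by
    intro y
    by_cases hy : y ∈ Ioo p q
    · rw [indicator_of_mem ((mem_Omega_iff hx0 hx1).2 hy), indicator_of_mem hy,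
        betaDens_eq_of_mem hx0 hx1 hy, ← ENNReal.ofReal_mul (by positivity),
        show β - 1/2 - 1 = β - 3/2 by ring, show α - 1/2 - 1 = α - 3/2 by ring]
    · rw [indicator_of_notMem (mt (mem_Omega_iff hx0 hx1).1 hy), indicator_of_notMem hy]
  rw [lintegral_congr hfiber, lintegral_indicator measurableSet_Ioo]
  by_cases hz : z ∈ Ioo (-√(x * (1 - x))) √(x * (1 - x))
  · have hpq : p < q := by
      rw [← sub_pos, hqp, sub_pos, div_lt_one (by positivity)]
      exact sq_lt.2 hz
    rw [indicator_of_mem hz, lintegral_const_mul' _ _ ENNReal.ofReal_ne_top,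
      lintegral_Ioo_sub_rpow_mul_sub_rpow hpq (by linarith) (by linarith),
      ← ENNReal.ofReal_mul (by positivity), hqp]
    congr 1
    rw [show β - 1/2 + (α - 1/2) - 1 = α + β - 2 by ring]
    ring
  · have hqp : q ≤ p := by
      rw [← sub_nonpos, hqp, sub_nonpos, one_le_div (by positivity)]
      exact not_lt.1 (mt sq_lt.1 hz)
    rw [indicator_of_notMem hz, Ioo_eq_empty (not_lt.2 hqp), Measure.restrict_empty,
      lintegral_zero_measure]

theorem lintegral_indicator_Omega_slice (hα : 1/2 < α) (hβ : 1/2 < β) (hx0 : 0 < x)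
    (hx1 : x < 1) :
    ∫⁻ yz : ℝ × ℝ, Omega.indicator (fun p => ENNReal.ofReal (betaDens α β p)) (x, yz) =
      ENNReal.ofReal (√π * Gamma (α - 1/2) * Gamma (β - 1/2) / Gamma (α + β - 1/2) *
        (x ^ (β - 1) * (1 - x) ^ (α - 1))) := by
  have h1x : 0 < 1 - x := sub_pos.2 hx1
  have hmeas : Measurable fun yz : ℝ × ℝ =>
      Omega.indicator (fun p => ENNReal.ofReal (betaDens α β p)) (x, yz) :=
    ((measurable_betaDens α β).ennreal_ofReal.indicator measurableSet_Omega).comp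
      measurable_prodMk_left
  rw [Measure.volume_eq_prod, lintegral_prod_symm _ hmeas.aemeasurable]
  simp only [lintegral_indicator_Omega_fiber hα hβ hx0 hx1]
  rw [lintegral_indicator measurableSet_Ioo]
  set c := √(x * (1 - x)) with hc_def
  have hc : 0 < c := sqrt_pos.2 (by positivity)
  have hc2 : c ^ 2 = x * (1 - x) := sq_sqrt (by positivity)
  set K := (1 - x) ^ (α - 3/2) * x ^ (β - 3/2) * beta (β - 1/2) (α - 1/2) with hK_def
  have hK : 0 ≤ K := (mul_pos (by positivity) (beta_pos (by linarith) (by linarith))).le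
  have hfactor : ∀ z ∈ Ioo (-c) c,
      ENNReal.ofReal (K * (1 - z ^ 2 / (x * (1 - x))) ^ (α + β - 2)) =
        ENNReal.ofReal K * ENNReal.ofReal ((1 - z ^ 2 / c ^ 2) ^ (α + β - 1 - 1)) := by
    intro z _
    rw [hc2, ← ENNReal.ofReal_mul hK, show α + β - 1 - 1 = α + β - 2 by ring]
  rw [setLIntegral_congr_fun measurableSet_Ioo hfactor,
    lintegral_const_mul' _ _ ENNReal.ofReal_ne_top,
    lintegral_Ioo_one_sub_sq_div_sq_rpow hc (by linarith), ← ENNReal.ofReal_mul hK]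
  congr 1
  have hΓ : Gamma (α + β - 1) ≠ 0 := (Gamma_pos_of_pos (by linarith)).ne'
  rw [hK_def, beta, show β - 1/2 + (α - 1/2) = α + β - 1 by ring,
    show α + β - 1 + 1/2 = α + β - 1/2 by ring, hc_def, sqrt_mul hx0.le, sqrt_eq_rpow,
    sqrt_eq_rpow, show β - 1 = β - 3/2 + 1/2 by ring, show α - 1 = α - 3/2 + 1/2 by ring,
    rpow_add hx0, rpow_add h1x]
  field_simp

theorem lintegral_betaDens_Omega (hα : 1/2 < α) (hβ : 1/2 < β) :
    ∫⁻ p in Omega, ENNReal.ofReal (betaDens α β p) =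
      ENNReal.ofReal (Gamma2 α * Gamma2 β / Gamma2 (α + β)) := by
  have hmeas := (measurable_betaDens α β).ennreal_ofReal.indicator measurableSet_Omega
  set K := √π * Gamma (α - 1/2) * Gamma (β - 1/2) / Gamma (α + β - 1/2) with hK_def
  have hK : 0 ≤ K := by
    have := Gamma_pos_of_pos (by linarith : 0 < α - 1/2)
    have := Gamma_pos_of_pos (by linarith : 0 < β - 1/2)
    have := Gamma_pos_of_pos (by linarith : 0 < α + β - 1/2)
    positivity
  have hslice : ∀ x,
      ∫⁻ yz : ℝ × ℝ, Omega.indicator (fun p => ENNReal.ofReal (betaDens α β p)) (x, yz) =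
        (Set.Ioo 0 1).indicator (fun x =>
          ENNReal.ofReal K * ENNReal.ofReal (x ^ (β - 1) * (1 - x) ^ (α - 1))) x := by
    intro x
    by_cases hx : x ∈ Set.Ioo 0 1
    · rw [indicator_of_mem hx, lintegral_indicator_Omega_slice hα hβ hx.1 hx.2,
        ENNReal.ofReal_mul hK]
    · rw [indicator_of_notMem hx]
      refine lintegral_eq_zero_of_ae_eq_zero (ae_of_all _ fun yz => indicator_of_notMem ?_ _)
      exact fun h => hx ⟨h.1, sub_pos.1 h.2.1⟩
  rw [← lintegral_indicator measurableSet_Omega, Measure.volume_eq_prod,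
    lintegral_prod _ hmeas.aemeasurable, lintegral_congr hslice,
    lintegral_indicator measurableSet_Ioo, lintegral_const_mul' _ _ ENNReal.ofReal_ne_top,
    lintegral_Ioo_rpow_mul_one_sub_rpow (by linarith) (by linarith), ← ENNReal.ofReal_mul hK]
  congr 1
  have := Gamma_pos_of_pos (by linarith : 0 < α + β - 1/2)
  have := Gamma_pos_of_pos (by linarith : 0 < α + β)
  rw [hK_def, beta, Gamma2, Gamma2, Gamma2, add_comm β α]
  field_simp

theorem B2_eq_Gamma2 (hα : 1/2 < α) (hβ : 1/2 < β) :
    B2 α β = Gamma2 α * Gamma2 β / Gamma2 (α + β) := by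
  have hnonneg : 0 ≤ᵐ[volume.restrict Omega] betaDens α β :=
    (ae_restrict_iff' measurableSet_Omega).2 (ae_of_all _ fun p ⟨_, _, h, h'⟩ => by
      unfold betaDens; positivity)
  rw [B2, integral_eq_lintegral_of_nonneg_ae hnonneg
      (measurable_betaDens α β).aestronglyMeasurable, lintegral_betaDens_Omega hα hβ,
    ENNReal.toReal_ofReal
      (div_pos (mul_pos (Gamma2_pos hα) (Gamma2_pos hβ)) (Gamma2_pos (by linarith))).le]

end Omega

/-- B₂(α+1,β) = α(α−1/2)/((α+β)(α+β−1/2)) · B₂(α,β). -/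
theorem B2_alpha_succ (α β : ℝ) (hα : 1/2 < α) (hβ : 1/2 < β) :
    B2 (α + 1) β = (α * (α - 1/2)) / ((α + β) * (α + β - 1/2)) * B2 α β := by
  rw [B2_eq_Gamma2 (by linarith) hβ, B2_eq_Gamma2 hα hβ, add_right_comm,
    Gamma2_add_one (by linarith) (by linarith), Gamma2_add_one (by linarith) (by linarith)]
  have := Gamma2_pos hα
  have := Gamma2_pos hβ
  have := Gamma2_pos (by linarith : 1/2 < α + β)
  have : 0 < α + β - 1/2 := by linarith
  field_simp
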